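/- Let m ≥ 1, n ≥ 3 be integers and let p satisfy p_crit(m,n) < p < p_conf(m,n). Then there exists γ > 0 with 1/(p(p+1)) < γ and γ < ((m+2)n - 2)/(2(m+2)) - ((m+2)n - m)/((m+2)(p+1)); moreover any such γ satisfies p·γ > 1/(p+1). -/

import Mathlib

/-!
Clearing denominators, `1/(p(p+1))` lies below the upper bound for `γ` exactly when the
quadratic defining `p_crit` is positive at `p`. That quadratic is negative at `0` and its
leading coefficient is nonnegative, so it is positive to the right of its positive root.
Any `γ` in the resulting nonempty interval then gives `p γ > p/(p(p+1)) = 1/(p+1)`.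
-/

noncomputable def critQuadratic (m n p : ℝ) : ℝ :=
  ((m + 2) * n / 2 - 1) * p ^ 2 + ((m + 2) * (1 - n / 2) - 3) * p - (m + 2)

noncomputable def gammaUpperBound (m n p : ℝ) : ℝ :=
  ((m + 2) * n - 2) / (2 * (m + 2)) - ((m + 2) * n - m) / ((m + 2) * (p + 1))

theorem pos_of_gt_pos_root_of_quadratic {a b c r x : ℝ} (ha : 0 ≤ a) (hc : 0 < c)
    (hr : 0 < r) (hroot : a * r ^ 2 + b * r - c = 0) (hrx : r < x) :
    0 < a * x ^ 2 + b * x - c := by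
  have hslope : 0 < a * r + b := by
    refine pos_of_mul_pos_right (a := r) ?_ hr.le
    nlinarith
  have hfactor : a * x ^ 2 + b * x - c = (x - r) * (a * r + b + a * x) := by
    linear_combination hroot
  rw [hfactor]
  have hx : 0 < x := hr.trans hrx
  exact mul_pos (sub_pos.mpr hrx) (by positivity)

theorem critQuadratic_pos_of_gt_root {m n pc p : ℝ} (hm : 0 ≤ m) (hn : 3 ≤ n) (hpc : 0 < pc)
    (hroot : critQuadratic m n pc = 0) (hp : pc < p) : 0 < critQuadratic m n p :=
  pos_of_gt_pos_root_of_quadratic (by nlinarith) (by linarith) hpc hroot hp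

theorem gammaUpperBound_sub_one_div_eq {m n p : ℝ} (hm : 0 ≤ m) (hp : 0 < p) :
    gammaUpperBound m n p - 1 / (p * (p + 1)) =
      critQuadratic m n p / ((m + 2) * p * (p + 1)) := by
  have hm2 : m + 2 ≠ 0 := by positivity
  have hp1 : p + 1 ≠ 0 := by positivity
  unfold gammaUpperBound critQuadratic
  field_simp
  ring

theorem one_div_mul_succ_lt_gammaUpperBound {m n pc p : ℝ} (hm : 0 ≤ m) (hn : 3 ≤ n)
    (hpc : 0 < pc) (hroot : critQuadratic m n pc = 0) (hp : pc < p) :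
    1 / (p * (p + 1)) < gammaUpperBound m n p := by
  have hp0 : 0 < p := hpc.trans hp
  have hgap : 0 < gammaUpperBound m n p - 1 / (p * (p + 1)) := by
    rw [gammaUpperBound_sub_one_div_eq hm hp0]
    exact div_pos (critQuadratic_pos_of_gt_root hm hn hpc hroot hp) (by positivity)
  linarith

theorem stmt_4 (m n : ℕ) (hn : 3 ≤ n) (pc p : ℝ) (hpc : 0 < pc)
    (hroot : (((m : ℝ) + 2) * (n : ℝ) / 2 - 1) * pc ^ 2
        + (((m : ℝ) + 2) * (1 - (n : ℝ) / 2) - 3) * pc - ((m : ℝ) + 2) = 0)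
    (hp₁ : pc < p) :
    (∃ γ : ℝ, 0 < γ ∧ 1 / (p * (p + 1)) < γ ∧
        γ < (((m : ℝ) + 2) * (n : ℝ) - 2) / (2 * ((m : ℝ) + 2))
              - (((m : ℝ) + 2) * (n : ℝ) - (m : ℝ)) / (((m : ℝ) + 2) * (p + 1))) ∧
    (∀ γ : ℝ, 1 / (p * (p + 1)) < γ →
        γ < (((m : ℝ) + 2) * (n : ℝ) - 2) / (2 * ((m : ℝ) + 2))
              - (((m : ℝ) + 2) * (n : ℝ) - (m : ℝ)) / (((m : ℝ) + 2) * (p + 1)) →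
        p * γ > 1 / (p + 1)) := by
  have hp : 0 < p := hpc.trans hp₁
  have hlower : 0 < 1 / (p * (p + 1)) := by positivity
  have hlt : 1 / (p * (p + 1)) < gammaUpperBound m n p :=
    one_div_mul_succ_lt_gammaUpperBound m.cast_nonneg (by exact_mod_cast hn) hpc hroot hp₁
  refine ⟨⟨(1 / (p * (p + 1)) + gammaUpperBound m n p) / 2, by linarith, by linarith,
    by unfold gammaUpperBound at hlt ⊢; linarith⟩, fun γ hγ _ => ?_⟩
  calc 1 / (p + 1) = p * (1 / (p * (p + 1))) := by field_simp
    _ < p * γ := by gcongr
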